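/- arXiv:2212.08374 — 8 statements merged into one kernel-verified Lean document; each statement's English description precedes it below -/
import Mathlib

section
/- Let u₁ : [0,1] → ℂ be four times continuously differentiable and u₂ : [0,1] → ℂ be three times continuously differentiable with u₁'(0) = u₂'(0) = 0. Set v₁(ρ) = −ρ·u₁'(ρ) − u₁(ρ) + u₂(ρ) and v₂(ρ) = u₁''(ρ) + (4/ρ)·u₁'(ρ) − ρ·u₂'(ρ) − 2·u₂(ρ). Then Re( ∫₀¹ v₁'(ρ)·conj(u₁'(ρ))·ρ⁴ dρ + ∫₀¹ v₂(ρ)·conj(u₂(ρ))·ρ⁴ dρ + v₁(1)·conj(u₁(1)) ) ≤ (1/2)·( ∫₀¹ |u₁'(ρ)|²·ρ⁴ dρ + ∫₀¹ |u₂(ρ)|²·ρ⁴ dρ + |u₁(1)|² ). -/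
/-!
With `F = u₁'` and `G = u₂`, the real part of the integrand of `(L̃₀u, u)_{E₁}` is the derivative
of the flux `ρ⁴ Re (F conj G) - ρ⁵ (|F|² + |G|²) / 2` plus `ρ⁴ (|F|² + |G|²) / 2`. The weight `ρ⁵`
kills the flux at `ρ = 0`, and at `ρ = 1` the flux plus the boundary term `Re (v₁(1) conj u₁(1))`
equals `-(|G(1) - F(1) - u₁(1)|² + |u₁(1)|²) / 2 ≤ 0`.
-/

open Set MeasureTheory intervalIntegral ComplexConjugate

noncomputable def energyFlux (F G : ℝ → ℂ) (ρ : ℝ) : ℝ :=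
  ρ ^ 4 * (F ρ * conj (G ρ)).re - ρ ^ 5 / 2 * (‖F ρ‖ ^ 2 + ‖G ρ‖ ^ 2)

@[simp]
theorem energyFlux_zero (F G : ℝ → ℂ) : energyFlux F G 0 = 0 := by
  simp [energyFlux]

theorem hasDerivWithinAt_energyFlux {F G : ℝ → ℂ} {F' G' : ℂ} {s : Set ℝ} {ρ : ℝ}
    (hF : HasDerivWithinAt F F' s ρ) (hG : HasDerivWithinAt G G' s ρ) :
    HasDerivWithinAt (energyFlux F G)
      (((-ρ * F' - 2 * F ρ + G') * conj (F ρ) * (ρ : ℂ) ^ 4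
        + ((F' - ρ * G' - 2 * G ρ) * conj (G ρ) * (ρ : ℂ) ^ 4
          + 4 * (ρ : ℂ) ^ 3 * F ρ * conj (G ρ))).re
        - (‖F ρ‖ ^ 2 * ρ ^ 4 + ‖G ρ‖ ^ 2 * ρ ^ 4) / 2) s ρ := by
  have hflux_inner : energyFlux F G =
      fun t => t ^ 4 * inner ℝ (G t) (F t) - t ^ 5 / 2 * (‖F t‖ ^ 2 + ‖G t‖ ^ 2) := by
    ext t
    simp [energyFlux, Complex.inner]
  rw [hflux_inner]
  refine (((hasDerivWithinAt_pow 4 ρ).mul (hG.inner ℝ hF)).sub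
    (((hasDerivWithinAt_pow 5 ρ).div_const 2).mul (hF.norm_sq.add hG.norm_sq))).congr_deriv ?_
  simp only [Complex.inner, Complex.sq_norm, Complex.normSq_apply, ← Complex.ofReal_pow,
    Pi.add_apply, Complex.mul_re, Complex.mul_im, Complex.add_re, Complex.add_im, Complex.sub_re,
    Complex.sub_im, Complex.neg_re, Complex.neg_im, Complex.ofReal_re, Complex.ofReal_im,
    Complex.conj_re, Complex.conj_im, Complex.re_ofNat, Complex.im_ofNat]
  push_cast
  ring

theorem energyFlux_one_add_re_eq (F G : ℝ → ℂ) (a : ℂ) :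
    energyFlux F G 1 + ((-F 1 - a + G 1) * conj a).re
      = -(‖G 1 - F 1 - a‖ ^ 2 + ‖a‖ ^ 2) / 2 := by
  simp only [energyFlux, Complex.sq_norm, Complex.normSq_apply, Complex.mul_re, Complex.add_re,
    Complex.add_im, Complex.sub_re, Complex.sub_im, Complex.neg_re, Complex.neg_im,
    Complex.conj_re, Complex.conj_im]
  ring

theorem re_integral_add_integral_eq_energyFlux {F G F' G' : ℝ → ℂ}
    (hFd : ∀ ρ ∈ Icc (0 : ℝ) 1, HasDerivWithinAt F (F' ρ) (Icc 0 1) ρ)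
    (hGd : ∀ ρ ∈ Icc (0 : ℝ) 1, HasDerivWithinAt G (G' ρ) (Icc 0 1) ρ)
    (hF' : ContinuousOn F' (Icc 0 1)) (hG' : ContinuousOn G' (Icc 0 1)) :
    ((∫ ρ in (0 : ℝ)..1, (-ρ * F' ρ - 2 * F ρ + G' ρ) * conj (F ρ) * (ρ : ℂ) ^ 4)
      + ∫ ρ in (0 : ℝ)..1,
          (F' ρ + 4 / ρ * F ρ - ρ * G' ρ - 2 * G ρ) * conj (G ρ) * (ρ : ℂ) ^ 4).re
    = energyFlux F G 1
      + ((∫ ρ in (0 : ℝ)..1, ‖F ρ‖ ^ 2 * ρ ^ 4) + ∫ ρ in (0 : ℝ)..1, ‖G ρ‖ ^ 2 * ρ ^ 4) / 2 := by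
  have hF : ContinuousOn F (Icc 0 1) := fun ρ hρ => (hFd ρ hρ).continuousWithinAt
  have hG : ContinuousOn G (Icc 0 1) := fun ρ hρ => (hGd ρ hρ).continuousWithinAt
  set A : ℝ → ℂ := fun ρ => (-ρ * F' ρ - 2 * F ρ + G' ρ) * conj (F ρ) * (ρ : ℂ) ^ 4
  set B : ℝ → ℂ := fun ρ => (F' ρ - ρ * G' ρ - 2 * G ρ) * conj (G ρ) * (ρ : ℂ) ^ 4
    + 4 * (ρ : ℂ) ^ 3 * F ρ * conj (G ρ)
  have hB : ∫ ρ in (0 : ℝ)..1,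
      (F' ρ + 4 / ρ * F ρ - ρ * G' ρ - 2 * G ρ) * conj (G ρ) * (ρ : ℂ) ^ 4
      = ∫ ρ in (0 : ℝ)..1, B ρ := by
    refine integral_congr_ae (Filter.Eventually.of_forall fun ρ hρ => ?_)
    have hρ0 : (ρ : ℂ) ≠ 0 :=
      Complex.ofReal_ne_zero.mpr (uIoc_of_le (zero_le_one' ℝ) ▸ hρ).1.ne'
    simp only [B]
    field_simp
    ring
  have hAi : IntervalIntegrable A volume 0 1 :=
    ContinuousOn.intervalIntegrable_of_Icc zero_le_one (by fun_prop)
  have hBi : IntervalIntegrable B volume 0 1 :=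
    ContinuousOn.intervalIntegrable_of_Icc zero_le_one (by fun_prop)
  have hF2 : IntervalIntegrable (fun ρ => ‖F ρ‖ ^ 2 * ρ ^ 4) volume 0 1 :=
    ContinuousOn.intervalIntegrable_of_Icc zero_le_one (by fun_prop)
  have hG2 : IntervalIntegrable (fun ρ => ‖G ρ‖ ^ 2 * ρ ^ 4) volume 0 1 :=
    ContinuousOn.intervalIntegrable_of_Icc zero_le_one (by fun_prop)
  have hABre : IntervalIntegrable (fun ρ => (A ρ + B ρ).re) volume 0 1 :=
    ContinuousOn.intervalIntegrable_of_Icc zero_le_one (by fun_prop)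
  have hflux := integral_eq_sub_of_hasDerivAt_of_le zero_le_one
    (fun ρ hρ => (hasDerivWithinAt_energyFlux (hFd ρ hρ) (hGd ρ hρ)).continuousWithinAt)
    (fun ρ hρ => (hasDerivWithinAt_energyFlux (hFd ρ (Ioo_subset_Icc_self hρ))
      (hGd ρ (Ioo_subset_Icc_self hρ))).hasDerivAt (Icc_mem_nhds hρ.1 hρ.2))
    (hABre.sub ((hF2.add hG2).div_const 2))
  have hre : ∫ ρ in (0 : ℝ)..1, (A ρ + B ρ).re = (∫ ρ in (0 : ℝ)..1, A ρ + B ρ).re :=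
    intervalIntegral_re (hAi.add hBi)
  rw [hB, ← integral_add hAi hBi, ← hre]
  rw [integral_sub hABre ((hF2.add hG2).div_const 2), intervalIntegral.integral_div,
    integral_add hF2 hG2, energyFlux_zero, sub_zero] at hflux
  linarith

theorem stmt_1_general (u₁ u₂ v₁ v₂ : ℝ → ℂ)
    (hu₁ : ContDiffOn ℝ 4 u₁ (Icc 0 1))
    (hu₂ : ContDiffOn ℝ 3 u₂ (Icc 0 1))
    (hv₁ : ∀ ρ : ℝ, v₁ ρ = -(ρ : ℂ) * derivWithin u₁ (Icc 0 1) ρ - u₁ ρ + u₂ ρ)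
    (hv₂ : ∀ ρ : ℝ, v₂ ρ = derivWithin (derivWithin u₁ (Icc 0 1)) (Icc 0 1) ρ
        + (4 / (ρ : ℂ)) * derivWithin u₁ (Icc 0 1) ρ - (ρ : ℂ) * derivWithin u₂ (Icc 0 1) ρ
        - 2 * u₂ ρ) :
    ((∫ ρ in (0:ℝ)..1, derivWithin v₁ (Icc 0 1) ρ
        * (starRingEnd ℂ) (derivWithin u₁ (Icc 0 1) ρ) * (ρ : ℂ) ^ 4)
      + (∫ ρ in (0:ℝ)..1, v₂ ρ * (starRingEnd ℂ) (u₂ ρ) * (ρ : ℂ) ^ 4)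
      + v₁ 1 * (starRingEnd ℂ) (u₁ 1)).re
    ≤ (1 / 2) * ((∫ ρ in (0:ℝ)..1, ‖derivWithin u₁ (Icc 0 1) ρ‖ ^ 2 * ρ ^ 4)
      + (∫ ρ in (0:ℝ)..1, ‖u₂ ρ‖ ^ 2 * ρ ^ 4) + ‖u₁ 1‖ ^ 2) := by
  have hI : UniqueDiffOn ℝ (Icc (0 : ℝ) 1) := uniqueDiffOn_Icc one_pos
  set F := derivWithin u₁ (Icc 0 1)
  have hF : ContDiffOn ℝ 3 F (Icc 0 1) := hu₁.derivWithin hI (by norm_num)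
  have hu₁d : ∀ ρ ∈ Icc (0 : ℝ) 1, HasDerivWithinAt u₁ (F ρ) (Icc 0 1) ρ :=
    fun ρ hρ => (hu₁.differentiableOn (by norm_num) ρ hρ).hasDerivWithinAt
  have hFd : ∀ ρ ∈ Icc (0 : ℝ) 1, HasDerivWithinAt F (derivWithin F (Icc 0 1) ρ) (Icc 0 1) ρ :=
    fun ρ hρ => (hF.differentiableOn (by norm_num) ρ hρ).hasDerivWithinAt
  have hu₂d : ∀ ρ ∈ Icc (0 : ℝ) 1,
      HasDerivWithinAt u₂ (derivWithin u₂ (Icc 0 1) ρ) (Icc 0 1) ρ :=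
    fun ρ hρ => (hu₂.differentiableOn (by norm_num) ρ hρ).hasDerivWithinAt
  have hv₁' : ∀ ρ ∈ uIcc (0 : ℝ) 1, derivWithin v₁ (Icc 0 1) ρ * conj (F ρ) * (ρ : ℂ) ^ 4
      = (-ρ * derivWithin F (Icc 0 1) ρ - 2 * F ρ + derivWithin u₂ (Icc 0 1) ρ)
        * conj (F ρ) * (ρ : ℂ) ^ 4 := by
    intro ρ hρ
    rw [uIcc_of_le zero_le_one] at hρ
    have h : HasDerivWithinAt v₁
        (-ρ * derivWithin F (Icc 0 1) ρ - 2 * F ρ + derivWithin u₂ (Icc 0 1) ρ) (Icc 0 1) ρ := by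
      rw [funext hv₁]
      exact ((((hasDerivWithinAt_id ρ _).ofReal_comp.neg.mul (hFd ρ hρ)).sub (hu₁d ρ hρ)).add
        (hu₂d ρ hρ)).congr_deriv (by simp only [id, Pi.neg_apply, Complex.ofReal_one]; ring)
    rw [h.derivWithin (hI ρ hρ)]
  rw [integral_congr hv₁']
  simp only [hv₂]
  rw [Complex.add_re, re_integral_add_integral_eq_energyFlux hFd hu₂d
    (hF.continuousOn_derivWithin hI (by norm_num)) (hu₂.continuousOn_derivWithin hI (by norm_num)),
    hv₁ 1, Complex.ofReal_one, neg_one_mul]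
  have hboundary := energyFlux_one_add_re_eq F u₂ (u₁ 1)
  linarith [sq_nonneg ‖u₂ 1 - F 1 - u₁ 1‖, sq_nonneg ‖u₁ 1‖]

/-- For `u₁ ∈ C⁴([0,1],ℂ)`, `u₂ ∈ C³([0,1],ℂ)` with `u₁'(0) = u₂'(0) = 0`,
setting `v₁ = −ρu₁' − u₁ + u₂` and `v₂ = u₁'' + (4/ρ)u₁' − ρu₂' − 2u₂`, one has
`Re (L̃₀u, u)_{E₁} ≤ (1/2) ‖u‖²_{E₁}`. -/
theorem stmt_1 (u₁ u₂ v₁ v₂ : ℝ → ℂ)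
    (hu₁ : ContDiffOn ℝ 4 u₁ (Icc 0 1))
    (hu₂ : ContDiffOn ℝ 3 u₂ (Icc 0 1))
    (hu₁0 : derivWithin u₁ (Icc 0 1) 0 = 0)
    (hu₂0 : derivWithin u₂ (Icc 0 1) 0 = 0)
    (hv₁ : ∀ ρ : ℝ, v₁ ρ = -(ρ : ℂ) * derivWithin u₁ (Icc 0 1) ρ - u₁ ρ + u₂ ρ)
    (hv₂ : ∀ ρ : ℝ, v₂ ρ = derivWithin (derivWithin u₁ (Icc 0 1)) (Icc 0 1) ρ
        + (4 / (ρ : ℂ)) * derivWithin u₁ (Icc 0 1) ρ - (ρ : ℂ) * derivWithin u₂ (Icc 0 1) ρ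
        - 2 * u₂ ρ) :
    ((∫ ρ in (0:ℝ)..1, derivWithin v₁ (Icc 0 1) ρ
        * (starRingEnd ℂ) (derivWithin u₁ (Icc 0 1) ρ) * (ρ : ℂ) ^ 4)
      + (∫ ρ in (0:ℝ)..1, v₂ ρ * (starRingEnd ℂ) (u₂ ρ) * (ρ : ℂ) ^ 4)
      + v₁ 1 * (starRingEnd ℂ) (u₁ 1)).re
    ≤ (1 / 2) * ((∫ ρ in (0:ℝ)..1, ‖derivWithin u₁ (Icc 0 1) ρ‖ ^ 2 * ρ ^ 4)
      + (∫ ρ in (0:ℝ)..1, ‖u₂ ρ‖ ^ 2 * ρ ^ 4) + ‖u₁ 1‖ ^ 2) :=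
  stmt_1_general u₁ u₂ v₁ v₂ hu₁ hu₂ hv₁ hv₂
end

section
/- There exists a constant C > 0 such that for every twice continuously differentiable function f : [0,1] → ℂ one has ∫₀¹ |f'(ρ)|²·ρ² dρ ≤ C·∫₀¹ (|f(ρ)|² + |f'(ρ)|² + |f''(ρ)|²)·ρ⁴ dρ. -/
open Set MeasureTheory

/-! With `g = f'`, the function `ρ³ (1 - ρ) ‖g ρ‖²` vanishes at both ends of `[0, 1]`, so its
derivative `(3ρ² - 4ρ³) ‖g‖² + ρ³ (1 - ρ) · 2⟪g, g'⟫` has integral zero. Bounding the cross term by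
`ρ² ‖g‖² + ρ⁴ ‖g'‖²` and using `4ρ³ ≤ ρ² + 4ρ⁴` turns this into
`∫ ρ² ‖g‖² ≤ ∫ (4 ‖g‖² + ‖g'‖²) ρ⁴`, so `C = 4` works. -/

section Hardy

variable {F : Type*} [NormedAddCommGroup F] [InnerProductSpace ℝ F]

lemma hardy_integrand_le {ρ : ℝ} (h0 : 0 ≤ ρ) (h1 : ρ ≤ 1) (x y : F) :
    ‖x‖ ^ 2 * ρ ^ 2 - (4 * ‖x‖ ^ 2 + ‖y‖ ^ 2) * ρ ^ 4
      ≤ (3 * ρ ^ 2 - 4 * ρ ^ 3) * ‖x‖ ^ 2 + ρ ^ 3 * (1 - ρ) * (2 * inner ℝ x y) := by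
  have hxy : -(‖x‖ * ‖y‖) ≤ inner ℝ x y := neg_le_of_abs_le (abs_real_inner_le_norm x y)
  have hw : 0 ≤ ρ ^ 3 * (1 - ρ) := by have := sub_nonneg.2 h1; positivity
  nlinarith [mul_le_mul_of_nonneg_left hxy hw, mul_nonneg (sub_nonneg.2 h1)
    (sq_nonneg (ρ * ‖x‖ - ρ ^ 2 * ‖y‖)), sq_nonneg (ρ * ‖x‖ * (1 - 2 * ρ)), pow_nonneg h0 4,
    mul_nonneg h0 (sq_nonneg (ρ ^ 2 * ‖y‖))]

theorem integral_norm_sq_mul_sq_le {g g' : ℝ → F} (hg : ContinuousOn g (Icc 0 1))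
    (hg' : ContinuousOn g' (Icc 0 1)) (hderiv : ∀ x ∈ Ioo 0 1, HasDerivAt g (g' x) x) :
    ∫ ρ in (0 : ℝ)..1, ‖g ρ‖ ^ 2 * ρ ^ 2
      ≤ ∫ ρ in (0 : ℝ)..1, (4 * ‖g ρ‖ ^ 2 + ‖g' ρ‖ ^ 2) * ρ ^ 4 := by
  set D : ℝ → ℝ := fun ρ ↦ (3 * ρ ^ 2 - 4 * ρ ^ 3) * ‖g ρ‖ ^ 2
    + ρ ^ 3 * (1 - ρ) * (2 * inner ℝ (g ρ) (g' ρ))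
  have hDint : IntervalIntegrable D volume 0 1 :=
    ContinuousOn.intervalIntegrable_of_Icc zero_le_one (by fun_prop)
  have hD : ∫ ρ in (0 : ℝ)..1, D ρ = 0 := by
    have hφ : ∀ x ∈ Ioo (0 : ℝ) 1, HasDerivAt (fun ρ ↦ ρ ^ 3 * (1 - ρ) * ‖g ρ‖ ^ 2) (D x) x :=
      fun x hx ↦ (((hasDerivAt_pow 3 x).fun_mul ((hasDerivAt_id' x).const_sub 1)).fun_mul
        (hderiv x hx).norm_sq).congr_deriv (by push_cast; ring)
    simpa using intervalIntegral.integral_eq_sub_of_hasDerivAt_of_le zero_le_one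
      (by fun_prop) hφ hDint
  have hmono := intervalIntegral.integral_mono_on zero_le_one
    (ContinuousOn.intervalIntegrable_of_Icc zero_le_one (by fun_prop)) hDint
    fun ρ hρ ↦ hardy_integrand_le hρ.1 hρ.2 (g ρ) (g' ρ)
  rw [intervalIntegral.integral_sub
    (ContinuousOn.intervalIntegrable_of_Icc zero_le_one (by fun_prop))
    (ContinuousOn.intervalIntegrable_of_Icc zero_le_one (by fun_prop)), hD] at hmono
  linarith

end Hardy

/-- Hardy inequality for the derivative: there is `C > 0` such that for every
`f ∈ C²([0,1],ℂ)` one has `∫₀¹ |f'|²ρ² dρ ≤ C ∫₀¹ (|f|² + |f'|² + |f''|²)ρ⁴ dρ`. -/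
theorem stmt_8 : ∃ C : ℝ, 0 < C ∧ ∀ f : ℝ → ℂ, ContDiffOn ℝ 2 f (Icc 0 1) →
    (∫ ρ in (0:ℝ)..1, ‖derivWithin f (Icc 0 1) ρ‖ ^ 2 * ρ ^ 2)
      ≤ C * ∫ ρ in (0:ℝ)..1, (‖f ρ‖ ^ 2 + ‖derivWithin f (Icc 0 1) ρ‖ ^ 2
          + ‖derivWithin (derivWithin f (Icc 0 1)) (Icc 0 1) ρ‖ ^ 2) * ρ ^ 4 := by
  refine ⟨4, four_pos, fun f hf ↦ ?_⟩
  have hs : UniqueDiffOn ℝ (Icc (0 : ℝ) 1) := uniqueDiffOn_Icc one_pos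
  have hg : ContDiffOn ℝ 1 (derivWithin f (Icc 0 1)) (Icc 0 1) :=
    hf.derivWithin hs (by norm_num)
  have hg' := hg.continuousOn_derivWithin hs le_rfl
  have hderiv : ∀ x ∈ Ioo (0 : ℝ) 1, HasDerivAt (derivWithin f (Icc 0 1))
      (derivWithin (derivWithin f (Icc 0 1)) (Icc 0 1) x) x := fun x hx ↦
    ((hg.differentiableOn one_ne_zero x (Ioo_subset_Icc_self hx)).hasDerivWithinAt).hasDerivAt
      (Icc_mem_nhds hx.1 hx.2)
  calc _ ≤ _ := integral_norm_sq_mul_sq_le hg.continuousOn hg' hderiv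
    _ ≤ ∫ ρ in (0 : ℝ)..1, 4 * ((‖f ρ‖ ^ 2 + ‖derivWithin f (Icc 0 1) ρ‖ ^ 2
          + ‖derivWithin (derivWithin f (Icc 0 1)) (Icc 0 1) ρ‖ ^ 2) * ρ ^ 4) := by
      have hfc := hf.continuousOn
      have hgc := hg.continuousOn
      refine intervalIntegral.integral_mono_on zero_le_one
        (ContinuousOn.intervalIntegrable_of_Icc zero_le_one (by fun_prop))
        (ContinuousOn.intervalIntegrable_of_Icc zero_le_one (by fun_prop)) fun ρ _ ↦ ?_
      nlinarith [sq_nonneg ‖f ρ‖, sq_nonneg ‖derivWithin (derivWithin f (Icc 0 1)) (Icc 0 1) ρ‖,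
        pow_nonneg (sq_nonneg ρ) 2]
    _ = _ := intervalIntegral.integral_const_mul _ _
end

section
/- There exists a constant C > 0 such that for every continuously differentiable function f : [0,1] → ℂ one has ( ∫₀¹ |f(ρ)|⁶·ρ¹⁰ dρ )^{1/3} ≤ C·∫₀¹ (|f(ρ)|² + |f'(ρ)|²)·ρ⁴ dρ. -/
open Set MeasureTheory intervalIntegral
open scoped RealInnerProductSpace

/-! Write `F = ‖f‖²` and `W` for the weighted energy `∫₀¹ (‖f‖² + ‖f'‖²) t⁴`. Since
`|F'| ≤ ‖f‖² + ‖f'‖²`, integrating `(F t⁵)'` over `[0, 1]` gives `F 1 ≤ 6 W`, integrating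
`(F t⁴)'` over `[ρ, 1]` gives the pointwise bound `F ρ ρ⁴ ≤ 7 W`, and integrating `(F t³)'`
over `[0, 1]` together with AM–GM gives the Hardy-type bound `∫₀¹ F t² ≤ 5 W`. Hence
`∫₀¹ ‖f‖⁶ t¹⁰ = ∫₀¹ (F t⁴)² F t² ≤ (7 W)² · 5 W ≤ (7 W)³`. -/

theorem sub_le_integral_of_hasDerivAt_of_le {g g' φ : ℝ → ℝ} {a b : ℝ} (hab : a ≤ b)
    (hg : ContinuousOn g (Icc a b)) (hderiv : ∀ t ∈ Ioo a b, HasDerivAt g (g' t) t)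
    (hφ : ContinuousOn φ (Icc a b)) (hle : ∀ t ∈ Ioo a b, g' t ≤ φ t) :
    g b - g a ≤ ∫ t in a..b, φ t :=
  sub_le_integral_of_hasDeriv_right_of_le hab hg (fun t ht => (hderiv t ht).hasDerivWithinAt)
    hφ.integrableOn_Icc hle

section

variable {E : Type*} [NormedAddCommGroup E]

noncomputable def weightedEnergy (f f' : ℝ → E) : ℝ :=
  ∫ t in (0 : ℝ)..1, (‖f t‖ ^ 2 + ‖f' t‖ ^ 2) * t ^ 4

theorem weightedEnergy_nonneg (f f' : ℝ → E) : 0 ≤ weightedEnergy f f' :=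
  integral_nonneg zero_le_one fun t ht => by have := ht.1; positivity

variable [InnerProductSpace ℝ E]

theorem HasDerivAt.norm_sq_mul_pow {f : ℝ → E} {v : E} {t : ℝ} (hf : HasDerivAt f v t) (n : ℕ) :
    HasDerivAt (fun s => ‖f s‖ ^ 2 * s ^ n)
      (2 * ⟪f t, v⟫ * t ^ n + ‖f t‖ ^ 2 * (n * t ^ (n - 1))) t :=
  hf.norm_sq.mul (hasDerivAt_pow n t)

theorem abs_two_mul_inner_le (x y : E) : |2 * ⟪x, y⟫| ≤ ‖x‖ ^ 2 + ‖y‖ ^ 2 := by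
  rw [abs_mul, abs_two]
  nlinarith [abs_real_inner_le_norm x y, two_mul_le_add_sq ‖x‖ ‖y‖]

variable {f f' : ℝ → E}

theorem norm_sq_one_le_weightedEnergy (hf : ContinuousOn f (Icc 0 1))
    (hf' : ContinuousOn f' (Icc 0 1)) (hderiv : ∀ t ∈ Ioo 0 1, HasDerivAt f (f' t) t) :
    ‖f 1‖ ^ 2 ≤ 6 * weightedEnergy f f' := by
  have key := sub_le_integral_of_hasDerivAt_of_le zero_le_one (by fun_prop)
    (fun t ht => (hderiv t ht).norm_sq_mul_pow 5)
    (φ := fun t => 6 * ((‖f t‖ ^ 2 + ‖f' t‖ ^ 2) * t ^ 4)) (by fun_prop) fun t ⟨ht₀, ht₁⟩ => by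
      have ht : t ^ 5 ≤ t ^ 4 := pow_le_pow_of_le_one ht₀.le ht₁.le (by norm_num)
      have := abs_le.mp (abs_two_mul_inner_le (f t) (f' t))
      norm_num
      nlinarith [pow_nonneg ht₀.le 5]
  simpa [intervalIntegral.integral_const_mul, weightedEnergy] using key

theorem norm_sq_mul_pow_four_le_weightedEnergy (hf : ContinuousOn f (Icc 0 1))
    (hf' : ContinuousOn f' (Icc 0 1)) (hderiv : ∀ t ∈ Ioo 0 1, HasDerivAt f (f' t) t)
    {ρ : ℝ} (hρ : ρ ∈ Icc 0 1) :
    ‖f ρ‖ ^ 2 * ρ ^ 4 ≤ 7 * weightedEnergy f f' := by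
  have hfρ := hf.mono (Icc_subset_Icc hρ.1 le_rfl)
  have hf'ρ := hf'.mono (Icc_subset_Icc hρ.1 le_rfl)
  have key := sub_le_integral_of_hasDerivAt_of_le hρ.2
    (g := fun s => -(‖f s‖ ^ 2 * s ^ 4)) (by fun_prop)
    (fun t ht => ((hderiv t ⟨hρ.1.trans_lt ht.1, ht.2⟩).norm_sq_mul_pow 4).neg)
    (φ := fun t => (‖f t‖ ^ 2 + ‖f' t‖ ^ 2) * t ^ 4) (by fun_prop) fun t ⟨ht₀, _⟩ => by
      have := abs_le.mp (abs_two_mul_inner_le (f t) (f' t))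
      have ht : 0 ≤ t := hρ.1.trans ht₀.le
      norm_num
      nlinarith [pow_nonneg ht 4, pow_nonneg ht 3, sq_nonneg ‖f t‖]
  have hsub : ∫ t in ρ..1, (‖f t‖ ^ 2 + ‖f' t‖ ^ 2) * t ^ 4 ≤ weightedEnergy f f' :=
    integral_mono_interval hρ.1 hρ.2 le_rfl
      (ae_restrict_of_forall_mem measurableSet_Ioc fun t ht => by have := ht.1.le; positivity)
      ((by fun_prop : ContinuousOn _ _).intervalIntegrable_of_Icc zero_le_one)
  have := norm_sq_one_le_weightedEnergy hf hf' hderiv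
  simp only [one_pow, mul_one] at key
  linarith

theorem integral_norm_sq_mul_sq_le_weightedEnergy (hf : ContinuousOn f (Icc 0 1))
    (hf' : ContinuousOn f' (Icc 0 1)) (hderiv : ∀ t ∈ Ioo 0 1, HasDerivAt f (f' t) t) :
    ∫ t in (0 : ℝ)..1, ‖f t‖ ^ 2 * t ^ 2 ≤ 5 * weightedEnergy f f' := by
  have key := sub_le_integral_of_hasDerivAt_of_le zero_le_one
    (g := fun s => -(‖f s‖ ^ 2 * s ^ 3)) (by fun_prop)
    (fun t ht => ((hderiv t ht).norm_sq_mul_pow 3).neg)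
    (φ := fun t => 2 / 3 * ((‖f t‖ ^ 2 + ‖f' t‖ ^ 2) * t ^ 4) - 3 / 2 * (‖f t‖ ^ 2 * t ^ 2))
    (by fun_prop) fun t ⟨ht₀, _⟩ => by
      have := abs_le.mp (abs_real_inner_le_norm (f t) (f' t))
      norm_num
      -- AM–GM: `2 a b t³ ≤ (3/2) a² t² + (2/3) b² t⁴`
      nlinarith [pow_nonneg ht₀.le 3, pow_nonneg ht₀.le 4,
        sq_nonneg (3 * ‖f t‖ * t - 2 * ‖f' t‖ * t ^ 2)]
  rw [intervalIntegral.integral_sub, intervalIntegral.integral_const_mul,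
    intervalIntegral.integral_const_mul] at key
  · have hW : weightedEnergy f f' = ∫ t in (0 : ℝ)..1, (‖f t‖ ^ 2 + ‖f' t‖ ^ 2) * t ^ 4 := rfl
    have := norm_sq_one_le_weightedEnergy hf hf' hderiv
    have := weightedEnergy_nonneg f f'
    norm_num at key
    linarith
  all_goals exact (by fun_prop : ContinuousOn _ _).intervalIntegrable_of_Icc zero_le_one

theorem integral_norm_pow_six_mul_pow_ten_le_weightedEnergy (hf : ContinuousOn f (Icc 0 1))
    (hf' : ContinuousOn f' (Icc 0 1)) (hderiv : ∀ t ∈ Ioo 0 1, HasDerivAt f (f' t) t) :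
    ∫ t in (0 : ℝ)..1, ‖f t‖ ^ 6 * t ^ 10 ≤ (7 * weightedEnergy f f') ^ 3 := by
  set W := weightedEnergy f f'
  have hW := weightedEnergy_nonneg f f'
  have hpoint : ∀ t ∈ Icc (0 : ℝ) 1, ‖f t‖ ^ 6 * t ^ 10 ≤ (7 * W) ^ 2 * (‖f t‖ ^ 2 * t ^ 2) := by
    intro t ht
    have hsup := norm_sq_mul_pow_four_le_weightedEnergy hf hf' hderiv ht
    calc ‖f t‖ ^ 6 * t ^ 10 = (‖f t‖ ^ 2 * t ^ 4) ^ 2 * (‖f t‖ ^ 2 * t ^ 2) := by ring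
      _ ≤ (7 * W) ^ 2 * (‖f t‖ ^ 2 * t ^ 2) := by
        have := ht.1
        gcongr
  calc ∫ t in (0 : ℝ)..1, ‖f t‖ ^ 6 * t ^ 10
      ≤ ∫ t in (0 : ℝ)..1, (7 * W) ^ 2 * (‖f t‖ ^ 2 * t ^ 2) :=
        integral_mono_on zero_le_one
          ((by fun_prop : ContinuousOn _ _).intervalIntegrable_of_Icc zero_le_one)
          ((by fun_prop : ContinuousOn _ _).intervalIntegrable_of_Icc zero_le_one) hpoint
    _ ≤ (7 * W) ^ 2 * (5 * W) := by
        rw [intervalIntegral.integral_const_mul]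
        gcongr
        exact integral_norm_sq_mul_sq_le_weightedEnergy hf hf' hderiv
    _ ≤ (7 * W) ^ 3 := by nlinarith [pow_nonneg hW 3]

end

/-- Weighted Sobolev embedding: there is `C > 0` such that for every
`f ∈ C¹([0,1],ℂ)` one has `(∫₀¹ |f|⁶ρ¹⁰ dρ)^{1/3} ≤ C ∫₀¹ (|f|² + |f'|²)ρ⁴ dρ`. -/
theorem stmt_9 : ∃ C : ℝ, 0 < C ∧ ∀ f : ℝ → ℂ, ContDiffOn ℝ 1 f (Icc 0 1) →
    (∫ ρ in (0:ℝ)..1, ‖f ρ‖ ^ 6 * ρ ^ 10) ^ ((1 : ℝ) / 3)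
      ≤ C * ∫ ρ in (0:ℝ)..1, (‖f ρ‖ ^ 2 + ‖derivWithin f (Icc 0 1) ρ‖ ^ 2) * ρ ^ 4 := by
  refine ⟨7, by norm_num, fun f hf => ?_⟩
  have hderiv : ∀ t ∈ Ioo (0 : ℝ) 1, HasDerivAt f (derivWithin f (Icc 0 1) t) t := fun t ht =>
    ((hf.differentiableOn one_ne_zero t (Ioo_subset_Icc_self ht)).hasDerivWithinAt).hasDerivAt
      (Icc_mem_nhds ht.1 ht.2)
  have hbound := integral_norm_pow_six_mul_pow_ten_le_weightedEnergy hf.continuousOn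
    (hf.continuousOn_derivWithin (uniqueDiffOn_Icc one_pos) le_rfl) hderiv
  have hthird : (1 : ℝ) / 3 = ((3 : ℕ) : ℝ)⁻¹ := by norm_num
  calc (∫ ρ in (0:ℝ)..1, ‖f ρ‖ ^ 6 * ρ ^ 10) ^ ((1 : ℝ) / 3)
      ≤ ((7 * weightedEnergy f (derivWithin f (Icc 0 1))) ^ 3) ^ ((1 : ℝ) / 3) :=
        Real.rpow_le_rpow (integral_nonneg zero_le_one fun t ht => by have := ht.1; positivity)
          hbound (by norm_num)
    _ = 7 * weightedEnergy f (derivWithin f (Icc 0 1)) := by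
        rw [hthird, Real.pow_rpow_inv_natCast _ three_ne_zero]
        have := weightedEnergy_nonneg f (derivWithin f (Icc 0 1))
        positivity
end

section
/- Let α > 0 and C > 0. There exists a constant C' > 0, depending only on α and C, such that for every twice continuously differentiable function f : ℝ → ℂ satisfying |f(ω)| ≤ C·⟨ω⟩^{−1−α}, |f'(ω)| ≤ C·⟨ω⟩^{−2−α} and |f''(ω)| ≤ C·⟨ω⟩^{−3−α} for all ω ∈ ℝ, and for every a ∈ ℝ, one has | ∫_ℝ e^{iωa}·f(ω) dω | ≤ C'·⟨a⟩^{−2}. -/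
/-!
The integral is the Fourier transform `𝓕 f` at `w = -a / 2π`. Integrating by parts twice gives
`𝓕 f'' = (2πiw)² 𝓕 f`, hence `(1 + a²) ‖𝓕 f w‖ ≤ ‖f‖₁ + ‖f''‖₁`, and the symbol bounds make both
`L¹` norms at most `C` times an integral of `⟨ω⟩^{-p}` with `p > 1`.
-/

open MeasureTheory Real
open scoped FourierTransform

theorem integrable_sqrt_one_add_sq_rpow_neg {p : ℝ} (hp : 1 < p) :
    Integrable fun ω : ℝ => √(1 + ω ^ 2) ^ (-p) := by
  have h := integrable_rpow_neg_one_add_norm_sq (E := ℝ) (μ := volume) (r := p)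
    (by simpa using hp)
  refine h.congr (Filter.Eventually.of_forall fun ω => ?_)
  dsimp only
  rw [norm_eq_abs, sq_abs, sqrt_eq_rpow, ← rpow_mul (by positivity)]
  ring_nf

theorem integral_sqrt_one_add_sq_rpow_neg_pos {p : ℝ} (hp : 1 < p) :
    0 < ∫ ω : ℝ, √(1 + ω ^ 2) ^ (-p) := by
  rw [integral_pos_iff_support_of_nonneg (fun ω => by positivity)
    (integrable_sqrt_one_add_sq_rpow_neg hp)]
  have : Function.support (fun ω : ℝ => √(1 + ω ^ 2) ^ (-p)) = Set.univ :=
    Set.eq_univ_of_forall fun ω => (by simp only [Function.mem_support]; positivity)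
  simp [this]

theorem sqrt_one_add_sq_rpow_neg_two (a : ℝ) : √(1 + a ^ 2) ^ (-2 : ℝ) = (1 + a ^ 2)⁻¹ := by
  rw [rpow_neg (sqrt_nonneg _), rpow_two, sq_sqrt (by positivity)]

section

variable {E : Type*} [NormedAddCommGroup E]

theorem Continuous.integrable_of_norm_le_sqrt_one_add_sq_rpow_neg {g : ℝ → E} (hg : Continuous g)
    {c p : ℝ} (hp : 1 < p) (hbound : ∀ ω, ‖g ω‖ ≤ c * √(1 + ω ^ 2) ^ (-p)) : Integrable g :=
  ((integrable_sqrt_one_add_sq_rpow_neg hp).const_mul c).mono' hg.aestronglyMeasurable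
    (Filter.Eventually.of_forall hbound)

theorem integral_norm_le_of_norm_le_sqrt_one_add_sq_rpow_neg {g : ℝ → E} {c p : ℝ} (hp : 1 < p)
    (hbound : ∀ ω, ‖g ω‖ ≤ c * √(1 + ω ^ 2) ^ (-p)) :
    ∫ ω, ‖g ω‖ ≤ c * ∫ ω : ℝ, √(1 + ω ^ 2) ^ (-p) := by
  rw [← integral_const_mul]
  exact integral_mono_of_nonneg (Filter.Eventually.of_forall fun ω => norm_nonneg _)
    ((integrable_sqrt_one_add_sq_rpow_neg hp).const_mul c) (Filter.Eventually.of_forall hbound)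

variable [NormedSpace ℂ E]

theorem Real.norm_fourier_le_integral_norm (f : ℝ → E) (w : ℝ) : ‖𝓕 f w‖ ≤ ∫ v, ‖f v‖ :=
  VectorFourier.norm_fourierIntegral_le_integral_norm _ _ _ f w

theorem Real.fourier_deriv_deriv {f : ℝ → E} (hf : Integrable f) (hf' : Integrable (deriv f))
    (hf'' : Integrable (deriv (deriv f))) (h₁ : Differentiable ℝ f)
    (h₂ : Differentiable ℝ (deriv f)) (w : ℝ) :
    𝓕 (deriv (deriv f)) w = (2 * π * Complex.I * w) ^ 2 • 𝓕 f w := by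
  rw [Real.fourier_deriv hf' h₂ hf'', Real.fourier_deriv hf h₁ hf']
  simp only [smul_smul, sq]

theorem Real.one_add_sq_mul_norm_fourier_le {f : ℝ → E} (hf : Integrable f)
    (hf' : Integrable (deriv f)) (hf'' : Integrable (deriv (deriv f)))
    (h₁ : Differentiable ℝ f) (h₂ : Differentiable ℝ (deriv f)) (w : ℝ) :
    (1 + (2 * π * w) ^ 2) * ‖𝓕 f w‖ ≤ (∫ v, ‖f v‖) + ∫ v, ‖deriv (deriv f) v‖ := by
  have hnorm : (2 * π * w) ^ 2 * ‖𝓕 f w‖ = ‖𝓕 (deriv (deriv f)) w‖ := by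
    rw [Real.fourier_deriv_deriv hf hf' hf'' h₁ h₂, norm_smul, norm_pow]
    congr 1
    rw [show 2 * π * Complex.I * w = ((2 * π * w : ℝ) : ℂ) * Complex.I by push_cast; ring,
      norm_mul, Complex.norm_I, mul_one, Complex.norm_real, norm_eq_abs, sq_abs]
  rw [add_mul, one_mul, hnorm]
  exact add_le_add (norm_fourier_le_integral_norm f w) (norm_fourier_le_integral_norm _ w)

end

theorem integral_exp_I_mul_mul_eq_fourier (f : ℝ → ℂ) (a : ℝ) :
    ∫ ω : ℝ, Complex.exp (Complex.I * ω * a) * f ω = 𝓕 f (-(a / (2 * π))) := by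
  rw [Real.fourier_real_eq_integral_exp_smul]
  congr 1 with ω
  rw [smul_eq_mul]
  congr 2
  push_cast
  field_simp

/-- Oscillatory integral bound: if `f ∈ C²(ℝ,ℂ)` satisfies the symbol
bounds `|f⁽ʲ⁾(ω)| ≤ C⟨ω⟩^{−j−1−α}` for `j = 0,1,2`, then
`|∫ e^{iωa} f(ω) dω| ≤ C'⟨a⟩⁻²` with `C'` depending only on `α` and `C`. -/
theorem stmt_11 (α C : ℝ) (hα : 0 < α) (hC : 0 < C) :
    ∃ C' : ℝ, 0 < C' ∧ ∀ f : ℝ → ℂ, ContDiff ℝ 2 f →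
      (∀ ω : ℝ, ‖f ω‖ ≤ C * Real.sqrt (1 + ω ^ 2) ^ (-(1 + α))) →
      (∀ ω : ℝ, ‖deriv f ω‖ ≤ C * Real.sqrt (1 + ω ^ 2) ^ (-(2 + α))) →
      (∀ ω : ℝ, ‖deriv (deriv f) ω‖ ≤ C * Real.sqrt (1 + ω ^ 2) ^ (-(3 + α))) →
      ∀ a : ℝ,
        ‖∫ ω : ℝ, Complex.exp (Complex.I * ω * a) * f ω‖
          ≤ C' * Real.sqrt (1 + a ^ 2) ^ (-2 : ℝ) := by
  have hp₁ : 1 < 1 + α := by linarith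
  have hp₂ : 1 < 2 + α := by linarith
  have hp₃ : 1 < 3 + α := by linarith
  refine ⟨C * ((∫ ω : ℝ, √(1 + ω ^ 2) ^ (-(1 + α))) + ∫ ω : ℝ, √(1 + ω ^ 2) ^ (-(3 + α))),
    mul_pos hC (add_pos (integral_sqrt_one_add_sq_rpow_neg_pos hp₁)
      (integral_sqrt_one_add_sq_rpow_neg_pos hp₃)), fun f hf hf₀ hf₁ hf₂ a => ?_⟩
  have hf' : ContDiff ℝ 1 (deriv f) := hf.deriv'
  have key := Real.one_add_sq_mul_norm_fourier_le
    (hf.continuous.integrable_of_norm_le_sqrt_one_add_sq_rpow_neg hp₁ hf₀)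
    (hf'.continuous.integrable_of_norm_le_sqrt_one_add_sq_rpow_neg hp₂ hf₁)
    (hf'.continuous_deriv_one.integrable_of_norm_le_sqrt_one_add_sq_rpow_neg hp₃ hf₂)
    (hf.differentiable two_ne_zero) (hf'.differentiable one_ne_zero) (-(a / (2 * π)))
  rw [show (2 * π * -(a / (2 * π))) ^ 2 = a ^ 2 by field_simp] at key
  rw [integral_exp_I_mul_mul_eq_fourier, sqrt_one_add_sq_rpow_neg_two, ← div_eq_mul_inv,
    le_div_iff₀ (by positivity), mul_comm, mul_add]
  exact key.trans (add_le_add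
    (integral_norm_le_of_norm_le_sqrt_one_add_sq_rpow_neg hp₁ hf₀)
    (integral_norm_le_of_norm_le_sqrt_one_add_sq_rpow_neg hp₃ hf₂))
end

section
/- Let α ∈ (0,1) and β ∈ [0,1). There exists a constant C > 0, depending only on α and β, such that for all a ∈ ℝ with a ≠ 0, both ∫₀¹ s^{−β}·|a + (1/2)·log(1 − s²)|^{−α} ds ≤ C·|a|^{−α} and ∫₀¹ s^{−β}·|a − (1/2)·log(1 − s²)|^{−α} ds ≤ C·|a|^{−α}. -/
/-!
Write `F s = -½ log (1 - s²) ≥ 0`; the two integrands are `s^{-β} |b - F s|^{-α}` with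
`b = ±a`. For `b < 0`, `|b - F s| ≥ |b|`. For `b > 0`, let `u ≤ c ≤ v` be the points where `F`
takes the values `b/2`, `b`, `3b/2`. Off `[u, v]`, `|b - F s| ≥ b/2`. On `[u, v]`, convexity of
`F` together with `F 0 = 0` gives `|b - F s| ≥ (b / 2u) |s - c|` and `v - u ≤ 2u`; the
integrable singularity `|s - c|^{-α}` over a window of length `≤ 2u` then contributes
`≲ u^{1-β} b^{-α} ≤ b^{-α}`.
-/

open MeasureTheory Set intervalIntegral Real

theorem ConvexOn.div_mul_sub_le_sub {D : Set ℝ} {f : ℝ → ℝ} (hf : ConvexOn ℝ D f)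
    (h0 : 0 ∈ D) (hf0 : f 0 = 0) {u t s : ℝ} (hu : 0 < u) (hut : u ≤ t) (hts : t ≤ s) (hs : s ∈ D) :
    f u / u * (s - t) ≤ f s - f t := by
  rcases hts.eq_or_lt with rfl | hts
  · simp
  have hmem : ∀ x ∈ Icc 0 s, x ∈ D := fun x hx => hf.1.ordConnected.out h0 hs hx
  have hu' : u ∈ D := hmem u ⟨hu.le, by linarith⟩
  have ht' : t ∈ D := hmem t ⟨by linarith, hts.le⟩
  rw [← le_div_iff₀ (by linarith)]
  calc f u / u = (f u - f 0) / (u - 0) := by rw [hf0]; ring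
    _ ≤ (f s - f 0) / (s - 0) :=
      hf.secant_mono h0 hu' hs (by linarith) (by linarith) (by linarith)
    _ = (f 0 - f s) / (0 - s) := by rw [← neg_div_neg_eq, neg_sub, neg_sub]
    _ ≤ (f t - f s) / (t - s) :=
      hf.secant_mono hs h0 ht' (by linarith) (by linarith) (by linarith)
    _ = (f s - f t) / (s - t) := by rw [← neg_div_neg_eq, neg_sub, neg_sub]

lemma intervalIntegrable_and_integral_le_of_le {h M : ℝ → ℝ} {x y : ℝ} (hxy : x ≤ y)
    (hh : AEStronglyMeasurable h) (hM : IntervalIntegrable M volume x y)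
    (h0 : ∀ s ∈ Icc x y, 0 ≤ h s) (hle : ∀ s ∈ Icc x y, h s ≤ M s) :
    IntervalIntegrable h volume x y ∧ ∫ s in x..y, h s ≤ ∫ s in x..y, M s := by
  have hint : IntervalIntegrable h volume x y := by
    refine hM.mono_fun' hh.restrict ?_
    rw [uIoc_of_le hxy]
    refine (ae_restrict_iff' measurableSet_Ioc).2 (Filter.Eventually.of_forall fun s hs => ?_)
    simp only [Real.norm_of_nonneg (h0 s (Ioc_subset_Icc_self hs))]
    exact hle s (Ioc_subset_Icc_self hs)
  exact ⟨hint, integral_mono_on hxy hint hM hle⟩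

lemma intervalIntegrable_and_integral_abs_sub_rpow {r x y c : ℝ} (hr : -1 < r) (hxc : x ≤ c)
    (hcy : c ≤ y) :
    IntervalIntegrable (fun s => |s - c| ^ r) volume x y ∧
      ∫ s in x..y, |s - c| ^ r = ((c - x) ^ (r + 1) + (y - c) ^ (r + 1)) / (r + 1) := by
  have hleft : EqOn (fun s => |s - c| ^ r) (fun s => (c - s) ^ r) (uIcc x c) := by
    intro s hs
    rw [uIcc_of_le hxc] at hs
    simp only [abs_sub_comm s, abs_of_nonneg (sub_nonneg.2 hs.2)]
  have hright : EqOn (fun s => |s - c| ^ r) (fun s => (s - c) ^ r) (uIcc c y) := by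
    intro s hs
    rw [uIcc_of_le hcy] at hs
    simp only [abs_of_nonneg (sub_nonneg.2 hs.1)]
  have hIl : IntervalIntegrable (fun s => |s - c| ^ r) volume x c := by
    rw [intervalIntegrable_congr (hleft.mono uIoc_subset_uIcc)]
    simpa using ((intervalIntegrable_rpow' hr).comp_sub_left c : IntervalIntegrable _ volume
      (c - (c - x)) (c - 0))
  have hIr : IntervalIntegrable (fun s => |s - c| ^ r) volume c y := by
    rw [intervalIntegrable_congr (hright.mono uIoc_subset_uIcc)]
    simpa using ((intervalIntegrable_rpow' hr).comp_sub_right c : IntervalIntegrable _ volume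
      (0 + c) (y - c + c))
  refine ⟨hIl.trans hIr, ?_⟩
  rw [← integral_add_adjacent_intervals hIl hIr, integral_congr hleft, integral_congr hright,
    integral_comp_sub_left (fun s => s ^ r), integral_comp_sub_right (fun s => s ^ r), sub_self,
    integral_rpow (Or.inl hr), integral_rpow (Or.inl hr), zero_rpow (by linarith), sub_zero,
    sub_zero, add_div]

section Kernel

variable {α β : ℝ} {φ : ℝ → ℝ}

lemma integral_rpow_mul_abs_rpow_le_of_le_abs (hφ : Measurable φ) (hα : 0 ≤ α) (hβ : β < 1)
    {m x y : ℝ} (hm : 0 < m) (hx : 0 ≤ x) (hxy : x ≤ y) (hy : y ≤ 1)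
    (hφm : ∀ s ∈ Icc x y, m ≤ |φ s|) :
    IntervalIntegrable (fun s => s ^ (-β) * |φ s| ^ (-α)) volume x y ∧
      ∫ s in x..y, s ^ (-β) * |φ s| ^ (-α) ≤ m ^ (-α) / (1 - β) := by
  have hM : IntervalIntegrable (fun s => m ^ (-α) * s ^ (-β)) volume x y :=
    (intervalIntegrable_rpow' (by linarith)).const_mul _
  obtain ⟨hint, hle⟩ := intervalIntegrable_and_integral_le_of_le hxy
    (by fun_prop : Measurable fun s => s ^ (-β) * |φ s| ^ (-α)).aestronglyMeasurable hM
    (fun s hs => mul_nonneg (rpow_nonneg (hx.trans hs.1) _) (rpow_nonneg (abs_nonneg _) _))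
    (fun s hs => by
      rw [mul_comm]
      exact mul_le_mul_of_nonneg_right (rpow_le_rpow_of_nonpos hm (hφm s hs) (by linarith))
        (rpow_nonneg (hx.trans hs.1) _))
  refine ⟨hint, hle.trans ?_⟩
  have hy' : y ^ (1 - β) ≤ 1 := rpow_le_one (hx.trans hxy) hy (by linarith)
  have hx' : 0 ≤ x ^ (1 - β) := rpow_nonneg hx _
  rw [intervalIntegral.integral_const_mul, integral_rpow (Or.inl (by linarith)), neg_add_eq_sub,
    mul_div_assoc']
  gcongr
  exact mul_le_of_le_one_right (rpow_nonneg hm.le _) (by linarith)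

lemma integral_rpow_mul_abs_rpow_le_of_mul_abs_sub_le (hφ : Measurable φ) (hα : α ∈ Ioo 0 1)
    (hβ : 0 ≤ β) {m x y c : ℝ} (hm : 0 < m) (hx : 0 < x) (hxc : x ≤ c) (hcy : c ≤ y)
    (hc : φ c = 0) (hφm : ∀ s ∈ Icc x y, m * |s - c| ≤ |φ s|) :
    IntervalIntegrable (fun s => s ^ (-β) * |φ s| ^ (-α)) volume x y ∧
      ∫ s in x..y, s ^ (-β) * |φ s| ^ (-α) ≤
        x ^ (-β) * m ^ (-α) * (((c - x) ^ (1 - α) + (y - c) ^ (1 - α)) / (1 - α)) := by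
  obtain ⟨hIc, hc_int⟩ :=
    intervalIntegrable_and_integral_abs_sub_rpow (r := -α) (by linarith [hα.2]) hxc hcy
  have hK : 0 ≤ x ^ (-β) * m ^ (-α) := by positivity
  obtain ⟨hint, hle⟩ := intervalIntegrable_and_integral_le_of_le (hxc.trans hcy)
    (by fun_prop : Measurable fun s => s ^ (-β) * |φ s| ^ (-α)).aestronglyMeasurable
    (hIc.const_mul (x ^ (-β) * m ^ (-α)))
    (fun s hs => mul_nonneg (rpow_nonneg (hx.le.trans hs.1) _) (rpow_nonneg (abs_nonneg _) _))
    (fun s hs => by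
      rcases eq_or_ne s c with rfl | hsc
      · rw [hc, abs_zero, zero_rpow (by linarith [hα.1]), mul_zero]
        exact mul_nonneg hK (rpow_nonneg (abs_nonneg _) _)
      have hpos : 0 < m * |s - c| := mul_pos hm (abs_pos.2 (sub_ne_zero.2 hsc))
      calc s ^ (-β) * |φ s| ^ (-α) ≤ x ^ (-β) * (m * |s - c|) ^ (-α) :=
            mul_le_mul (rpow_le_rpow_of_nonpos hx hs.1 (by linarith))
              (rpow_le_rpow_of_nonpos hpos (hφm s hs) (by linarith [hα.1]))
              (rpow_nonneg (abs_nonneg _) _) (rpow_nonneg hx.le _)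
        _ = x ^ (-β) * m ^ (-α) * |s - c| ^ (-α) := by
            rw [mul_rpow hm.le (abs_nonneg _), mul_assoc])
  refine ⟨hint, hle.trans_eq ?_⟩
  rw [intervalIntegral.integral_const_mul, hc_int, neg_add_eq_sub]

lemma integral_rpow_mul_abs_rpow_le_of_split (hφ : Measurable φ) (hα : α ∈ Ioo 0 1)
    (hβ : β ∈ Ico 0 1) {a u c v : ℝ} (ha : 0 < a) (hu : 0 < u) (huc : u ≤ c) (hcv : c ≤ v)
    (hv : v ≤ 1) (hvu : v - u ≤ 2 * u) (hc : φ c = 0)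
    (hout : ∀ s ∈ Icc 0 u ∪ Icc v 1, a / 2 ≤ |φ s|)
    (hmid : ∀ s ∈ Icc u v, a / (2 * u) * |s - c| ≤ |φ s|) :
    IntervalIntegrable (fun s => s ^ (-β) * |φ s| ^ (-α)) volume 0 1 ∧
      ∫ s in (0 : ℝ)..1, s ^ (-β) * |φ s| ^ (-α) ≤ (4 / (1 - β) + 4 / (1 - α)) * a ^ (-α) := by
  obtain ⟨I₁, J₁⟩ := integral_rpow_mul_abs_rpow_le_of_le_abs hφ hα.1.le hβ.2 (half_pos ha)
    le_rfl hu.le (huc.trans (hcv.trans hv)) fun s hs => hout s (Or.inl hs)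
  obtain ⟨I₂, J₂⟩ := integral_rpow_mul_abs_rpow_le_of_mul_abs_sub_le hφ hα hβ.1
    (div_pos ha (by positivity)) hu huc hcv hc hmid
  obtain ⟨I₃, J₃⟩ := integral_rpow_mul_abs_rpow_le_of_le_abs hφ hα.1.le hβ.2 (half_pos ha)
    (hu.le.trans (huc.trans hcv)) hv le_rfl fun s hs => hout s (Or.inr hs)
  refine ⟨(I₁.trans I₂).trans I₃, ?_⟩
  rw [← integral_add_adjacent_intervals (I₁.trans I₂) I₃,
    ← integral_add_adjacent_intervals I₁ I₂]
  have h1α : 0 < 1 - α := by linarith [hα.2]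
  have h1β : 0 < 1 - β := by linarith [hβ.2]
  have haα : 0 ≤ a ^ (-α) := rpow_nonneg ha.le _
  have hhalf : (a / 2) ^ (-α) / (1 - β) ≤ 2 * a ^ (-α) / (1 - β) := by
    gcongr
    rw [div_rpow ha.le zero_le_two, rpow_neg zero_le_two, div_inv_eq_mul, mul_comm]
    exact mul_le_mul_of_nonneg_right
      ((rpow_le_rpow_of_exponent_le one_le_two hα.2.le).trans_eq (rpow_one 2)) haα
  -- the scale `a / (2u)` of the middle piece is compensated by its length `≤ 2u`
  have hscale : (a / (2 * u)) ^ (-α) * (2 * u) ^ (1 - α) = a ^ (-α) * (2 * u) := by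
    rw [div_rpow ha.le (by positivity), div_mul_eq_mul_div, mul_div_assoc,
      ← rpow_sub (by positivity), sub_neg_eq_add, sub_add_cancel, rpow_one]
  have hlen : ∀ ℓ, 0 ≤ ℓ → ℓ ≤ 2 * u → ℓ ^ (1 - α) ≤ (2 * u) ^ (1 - α) :=
    fun ℓ h0 hℓ => rpow_le_rpow h0 hℓ h1α.le
  have hmidC : u ^ (-β) * (a / (2 * u)) ^ (-α) *
      (((c - u) ^ (1 - α) + (v - c) ^ (1 - α)) / (1 - α)) ≤ 4 * a ^ (-α) / (1 - α) :=
    calc _ ≤ u ^ (-β) * (a / (2 * u)) ^ (-α) * ((2 * (2 * u) ^ (1 - α)) / (1 - α)) := by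
          gcongr
          linarith [hlen _ (by linarith) (by linarith : c - u ≤ 2 * u),
            hlen _ (by linarith) (by linarith : v - c ≤ 2 * u)]
      _ = 2 * u ^ (-β) * ((a / (2 * u)) ^ (-α) * (2 * u) ^ (1 - α)) / (1 - α) := by ring
      _ = 4 * (u ^ (-β) * u) * a ^ (-α) / (1 - α) := by rw [hscale]; ring
      _ ≤ 4 * a ^ (-α) / (1 - α) := by
          rw [← rpow_add_one hu.ne', neg_add_eq_sub]
          gcongr
          exact mul_le_of_le_one_right (by norm_num)
            (rpow_le_one hu.le (by linarith [huc.trans (hcv.trans hv)]) h1β.le)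
  have hC : (4 / (1 - β) + 4 / (1 - α)) * a ^ (-α) =
      2 * a ^ (-α) / (1 - β) + 4 * a ^ (-α) / (1 - α) + 2 * a ^ (-α) / (1 - β) := by ring
  linarith

end Kernel

namespace LogSingularIntegral

noncomputable def F (s : ℝ) : ℝ := -(1 / 2 * log (1 - s ^ 2))

lemma hasDerivAt_F {s : ℝ} (hs : s ∈ Ioo (-1) 1) : HasDerivAt F (s / (1 - s ^ 2)) s := by
  have hpos : 1 - s ^ 2 ≠ 0 := by nlinarith [hs.1, hs.2]
  refine ((((hasDerivAt_pow 2 s).const_sub 1).log hpos).const_mul (1 / 2)).fun_neg.congr_deriv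
    ?_
  ring

lemma F_nonneg {s : ℝ} (hs : s ^ 2 ≤ 1) : 0 ≤ F s := by
  have := log_nonpos (by linarith) (by nlinarith : 1 - s ^ 2 ≤ 1)
  unfold F; linarith

-- junk value: `log 0 = 0`
lemma F_one : F 1 = 0 := by simp [F]

lemma monotoneOn_F : MonotoneOn F (Ico 0 1) := by
  intro s hs t ht hst
  have := log_le_log (by nlinarith [ht.1, ht.2]) (by nlinarith [hs.1] : 1 - t ^ 2 ≤ 1 - s ^ 2)
  unfold F; linarith

lemma measurable_F : Measurable F := by unfold F; fun_prop

noncomputable def invF (y : ℝ) : ℝ := √(1 - exp (-2 * y))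

lemma invF_nonneg (y : ℝ) : 0 ≤ invF y := sqrt_nonneg _

lemma invF_lt_one (y : ℝ) : invF y < 1 :=
  (sqrt_lt' one_pos).2 (by linarith [exp_pos (-2 * y)])

lemma invF_pos {y : ℝ} (hy : 0 < y) : 0 < invF y :=
  sqrt_pos.2 (by linarith [exp_lt_one_iff.2 (by linarith : -2 * y < 0)])

lemma monotone_invF : Monotone invF := fun y z hyz =>
  sqrt_le_sqrt (by linarith [exp_le_exp.2 (by linarith : -2 * z ≤ -2 * y)])

lemma F_invF {y : ℝ} (hy : 0 ≤ y) : F (invF y) = y := by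
  rw [F, invF, sq_sqrt (by linarith [exp_le_one_iff.2 (by linarith : -2 * y ≤ 0)]),
    sub_sub_cancel, log_exp]
  ring

lemma convexOn_F : ConvexOn ℝ (Ioo (-1) 1) F := by
  refine MonotoneOn.convexOn_of_deriv (convex_Ioo _ _)
    (fun s hs => (hasDerivAt_F hs).continuousAt.continuousWithinAt)
    (fun s hs => DifferentiableAt.differentiableWithinAt
      (hasDerivAt_F (by rwa [interior_Ioo] at hs)).differentiableAt) ?_
  rw [interior_Ioo]
  intro s hs t ht hst
  rw [(hasDerivAt_F hs).deriv, (hasDerivAt_F ht).deriv,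
    div_le_div_iff₀ (by nlinarith [hs.1, hs.2]) (by nlinarith [ht.1, ht.2])]
  -- `s (1 - t²) - t (1 - s²) = (s - t) (1 + s t)`
  nlinarith [mul_nonneg (sub_nonneg.2 hst)
    (show 0 ≤ 1 + s * t by nlinarith [hs.1, hs.2, ht.1, ht.2])]

lemma F_div_mul_abs_sub_le {u s t : ℝ} (hu : 0 < u) (hs : s ∈ Ico u 1) (ht : t ∈ Ico u 1) :
    F u / u * |s - t| ≤ |F s - F t| := by
  have hslope : ∀ {s t : ℝ}, u ≤ t → t ≤ s → s < 1 → F u / u * (s - t) ≤ F s - F t :=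
    fun hut hts hs => convexOn_F.div_mul_sub_le_sub (by norm_num) (by simp [F]) hu hut hts
      ⟨by linarith, hs⟩
  rcases le_total t s with hts | hst
  · rw [abs_of_nonneg (sub_nonneg.2 hts)]
    exact (hslope ht.1 hts hs.2).trans (le_abs_self _)
  · rw [abs_sub_comm, abs_sub_comm (F s), abs_of_nonneg (sub_nonneg.2 hst)]
    exact (hslope hs.1 hst ht.2).trans (le_abs_self _)

section Sign

variable {α β : ℝ}

theorem integral_le_of_pos (hα : α ∈ Ioo 0 1) (hβ : β ∈ Ico 0 1) {a : ℝ} (ha : 0 < a) :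
    IntervalIntegrable (fun s => s ^ (-β) * |a - F s| ^ (-α)) volume 0 1 ∧
      ∫ s in (0 : ℝ)..1, s ^ (-β) * |a - F s| ^ (-α) ≤
        (4 / (1 - β) + 4 / (1 - α)) * a ^ (-α) := by
  set u := invF (a / 2)
  set c := invF a
  set v := invF (3 * a / 2)
  have hu : 0 < u := invF_pos (by positivity)
  have huc : u ≤ c := monotone_invF (by linarith)
  have hcv : c ≤ v := monotone_invF (by linarith)
  have hFu : F u = a / 2 := F_invF (by positivity)
  have hFc : F c = a := F_invF ha.le
  have hFv : F v = 3 * a / 2 := F_invF (by positivity)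
  have hslope : ∀ s ∈ Icc u v, ∀ t ∈ Icc u v, a / (2 * u) * |s - t| ≤ |F s - F t| := by
    intro s hs t ht
    rw [← div_div, ← hFu]
    exact F_div_mul_abs_sub_le hu ⟨hs.1, hs.2.trans_lt (invF_lt_one _)⟩
      ⟨ht.1, ht.2.trans_lt (invF_lt_one _)⟩
  have hvu : v - u ≤ 2 * u := by
    have := hslope v ⟨huc.trans hcv, le_rfl⟩ u ⟨le_rfl, huc.trans hcv⟩
    rw [hFv, hFu, abs_of_nonneg (by linarith), abs_of_nonneg (by linarith),
      show 3 * a / 2 - a / 2 = a / (2 * u) * (2 * u) by field_simp; ring] at this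
    exact le_of_mul_le_mul_left this (by positivity)
  refine integral_rpow_mul_abs_rpow_le_of_split (measurable_F.const_sub a) hα hβ ha hu huc hcv
    (invF_lt_one _).le hvu (by rw [hFc, sub_self]) ?_ fun s hs => ?_
  · rintro s (hs | hs)
    · have : F s ≤ a / 2 := hFu ▸ monotoneOn_F ⟨hs.1, hs.2.trans_lt (invF_lt_one _)⟩
        ⟨hu.le, invF_lt_one _⟩ hs.2
      rw [abs_of_nonneg (by linarith)]
      linarith
    · rcases hs.2.eq_or_lt with rfl | hs1
      · rw [F_one, sub_zero, abs_of_pos ha]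
        linarith
      · have : 3 * a / 2 ≤ F s := hFv ▸ monotoneOn_F ⟨invF_nonneg _, invF_lt_one _⟩
          ⟨(invF_nonneg _).trans hs.1, hs1⟩ hs.1
        rw [abs_sub_comm, abs_of_nonneg (by linarith)]
        linarith
  · have := hslope s hs c ⟨huc, hcv⟩
    rwa [abs_sub_comm (F s), hFc] at this

theorem integral_le_of_neg (hα : 0 ≤ α) (hβ : β < 1) {a : ℝ} (ha : a < 0) :
    IntervalIntegrable (fun s => s ^ (-β) * |a - F s| ^ (-α)) volume 0 1 ∧
      ∫ s in (0 : ℝ)..1, s ^ (-β) * |a - F s| ^ (-α) ≤ |a| ^ (-α) / (1 - β) :=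
  integral_rpow_mul_abs_rpow_le_of_le_abs (measurable_F.const_sub a) hα hβ (abs_pos.2 ha.ne)
    le_rfl zero_le_one le_rfl fun s hs => by
      have := F_nonneg (s := s) (by nlinarith [hs.1, hs.2])
      rw [abs_of_neg ha, abs_of_neg (by linarith)]
      linarith

theorem integral_le_of_ne_zero (hα : α ∈ Ioo 0 1) (hβ : β ∈ Ico 0 1) {a : ℝ} (ha : a ≠ 0) :
    IntervalIntegrable (fun s => s ^ (-β) * |a - F s| ^ (-α)) volume 0 1 ∧
      ∫ s in (0 : ℝ)..1, s ^ (-β) * |a - F s| ^ (-α) ≤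
        (4 / (1 - β) + 4 / (1 - α)) * |a| ^ (-α) := by
  rcases ha.lt_or_gt with ha | ha
  · obtain ⟨hI, hJ⟩ := integral_le_of_neg hα.1.le hβ.2 ha
    refine ⟨hI, hJ.trans ?_⟩
    have h1α : 0 < 1 - α := by linarith [hα.2]
    have h1β : 0 < 1 - β := by linarith [hβ.2]
    rw [div_eq_mul_inv, mul_comm, ← one_div]
    gcongr
    linarith [div_le_div_of_nonneg_right (by norm_num : (1 : ℝ) ≤ 4) h1β.le,
      div_nonneg (by norm_num : (0 : ℝ) ≤ 4) h1α.le]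
  · rw [abs_of_pos ha]
    exact integral_le_of_pos hα hβ ha

end Sign

end LogSingularIntegral

open LogSingularIntegral in
/-- For `α ∈ (0,1)`, `β ∈ [0,1)` there is `C > 0` (depending only on
`α, β`) such that for all `a ≠ 0`,
`∫₀¹ s^{−β}|a ± (1/2)log(1 − s²)|^{−α} ds ≤ C|a|^{−α}` (both integrals being finite). -/
theorem stmt_14 (α β : ℝ) (hα : α ∈ Set.Ioo (0 : ℝ) 1) (hβ : β ∈ Set.Ico (0 : ℝ) 1) :
    ∃ C : ℝ, 0 < C ∧ ∀ a : ℝ, a ≠ 0 →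
      (IntervalIntegrable
          (fun s : ℝ => s ^ (-β) * |a + (1 / 2) * Real.log (1 - s ^ 2)| ^ (-α)) volume 0 1 ∧
       (∫ s in (0:ℝ)..1, s ^ (-β) * |a + (1 / 2) * Real.log (1 - s ^ 2)| ^ (-α))
          ≤ C * |a| ^ (-α)) ∧
      (IntervalIntegrable
          (fun s : ℝ => s ^ (-β) * |a - (1 / 2) * Real.log (1 - s ^ 2)| ^ (-α)) volume 0 1 ∧
       (∫ s in (0:ℝ)..1, s ^ (-β) * |a - (1 / 2) * Real.log (1 - s ^ 2)| ^ (-α))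
          ≤ C * |a| ^ (-α)) := by
  have h1α : 0 < 1 - α := by linarith [hα.2]
  have h1β : 0 < 1 - β := by linarith [hβ.2]
  refine ⟨4 / (1 - β) + 4 / (1 - α), by positivity, fun a ha => ?_⟩
  have hplus : ∀ s : ℝ, a + 1 / 2 * log (1 - s ^ 2) = a - F s := fun s => by
    rw [F, sub_neg_eq_add]
  have hminus : ∀ s : ℝ, |a - 1 / 2 * log (1 - s ^ 2)| = |-a - F s| := fun s => by
    rw [F, sub_neg_eq_add, ← abs_neg, neg_sub, sub_eq_neg_add]
  simp only [hplus, hminus]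
  have hneg := integral_le_of_ne_zero hα hβ (neg_ne_zero.2 ha)
  rw [abs_neg] at hneg
  exact ⟨integral_le_of_ne_zero hα hβ ha, hneg⟩
end

section
/- Let T > 0 and define u(t,r) = (2/r)·arctan(r/(T − t)) for 0 ≤ t < T and r > 0. Then u satisfies ∂ₜ²u(t,r) − ∂ᵣ²u(t,r) − (4/r)·∂ᵣu(t,r) + ( sin(2r·u(t,r)) − 2r·u(t,r) )/r³ = 0 for all 0 ≤ t < T and r > 0. -/
/-!
With `a = T - t` one has `u = (2/r) arctan(r/a)`, so `∂ₜu = 2/(a² + r²)` and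
`∂ₜ²u = 4a/(a² + r²)²`, while `∂ᵣu = -(2/r²) arctan(r/a) + 2a/(r(a² + r²))`.
In the equation the `arctan` terms of `∂ᵣ²u`, `(4/r)∂ᵣu` and `2ru/r³` cancel, and
`sin(2ru) = sin(4 arctan(r/a))` is the rational function `4ra(a² - r²)/(a² + r²)²`,
so what remains is a rational identity in `a` and `r`.
-/

open Real Filter Topology

theorem Real.sin_four_mul_arctan (x : ℝ) :
    sin (4 * arctan x) = 4 * x * (1 - x ^ 2) / (1 + x ^ 2) ^ 2 := by
  have h_sin_mul_cos : sin (arctan x) * cos (arctan x) = x / (1 + x ^ 2) := by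
    rw [sin_arctan, cos_arctan, div_mul_div_comm, mul_one, mul_self_sqrt (by positivity)]
  rw [show 4 * arctan x = 2 * (2 * arctan x) by ring, sin_two_mul, sin_two_mul, cos_two_mul,
    cos_sq_arctan, mul_assoc 2 (sin _), h_sin_mul_cos]
  field_simp
  ring

lemma deriv_deriv_eq_of_hasDerivAt {𝕜 F : Type*} [NontriviallyNormedField 𝕜]
    [NormedAddCommGroup F] [NormedSpace 𝕜 F] {f f' : 𝕜 → F} {x : 𝕜} {f'' : F}
    (hf : ∀ᶠ y in 𝓝 x, HasDerivAt f (f' y) y) (hf' : HasDerivAt f' f'' x) :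
    deriv (deriv f) x = f'' :=
  (EventuallyEq.deriv_eq (hf.mono fun _ hy => hy.deriv)).trans hf'.deriv

lemma hasDerivAt_arctan_div_const (a r : ℝ) :
    HasDerivAt (fun ρ => arctan (ρ / a)) (1 / (1 + (r / a) ^ 2) * (1 / a)) r :=
  HasDerivAt.comp (h₂ := arctan) r (hasDerivAt_arctan (r / a))
    (by simpa using (hasDerivAt_id r).div_const a)

section Radial

variable {a r : ℝ}

lemma hasDerivAt_two_div_mul_arctan_div (ha : a ≠ 0) (hr : r ≠ 0) :
    HasDerivAt (fun ρ => 2 / ρ * arctan (ρ / a))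
      (-2 / r ^ 2 * arctan (r / a) + 2 * a / (r * (a ^ 2 + r ^ 2))) r := by
  have h_inv : HasDerivAt (fun ρ : ℝ => 2 / ρ) (-2 / r ^ 2) r := by
    simpa [div_eq_mul_inv, neg_div] using (hasDerivAt_inv hr).const_mul 2
  refine (h_inv.fun_mul (hasDerivAt_arctan_div_const a r)).congr_deriv ?_
  field_simp

lemma hasDerivAt_deriv_two_div_mul_arctan_div (ha : a ≠ 0) (hr : r ≠ 0) :
    HasDerivAt (fun ρ => -2 / ρ ^ 2 * arctan (ρ / a) + 2 * a / (ρ * (a ^ 2 + ρ ^ 2)))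
      (4 / r ^ 3 * arctan (r / a) - 4 * a * (a ^ 2 + 2 * r ^ 2) / (r ^ 2 * (a ^ 2 + r ^ 2) ^ 2))
      r := by
  have hD : a ^ 2 + r ^ 2 ≠ 0 := by positivity
  have h_sq : HasDerivAt (fun ρ : ℝ => ρ ^ 2) (2 * r) r := by
    simpa using hasDerivAt_pow 2 r
  have h_first := ((hasDerivAt_const r (-2 : ℝ)).fun_div h_sq (pow_ne_zero 2 hr)).fun_mul
    (hasDerivAt_arctan_div_const a r)
  have h_second := (hasDerivAt_const r (2 * a)).fun_div
    ((hasDerivAt_id' r).fun_mul ((hasDerivAt_const r (a ^ 2)).fun_add h_sq)) (mul_ne_zero hr hD)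
  refine (h_first.fun_add h_second).congr_deriv ?_
  field_simp
  ring

end Radial

section Temporal

variable {T r : ℝ}

lemma hasDerivAt_two_div_mul_arctan_div_sub {t : ℝ} (ht : T - t ≠ 0) (hr : r ≠ 0) :
    HasDerivAt (fun s => 2 / r * arctan (r / (T - s))) (2 / ((T - t) ^ 2 + r ^ 2)) t := by
  have h_quot : HasDerivAt (fun s => r / (T - s)) (r / (T - t) ^ 2) t := by
    simpa using (hasDerivAt_const t r).fun_div ((hasDerivAt_id t).const_sub T) ht
  refine (((hasDerivAt_arctan _).comp t h_quot).const_mul (2 / r)).congr_deriv ?_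
  field_simp

lemma hasDerivAt_two_div_sub_sq_add_sq (t : ℝ) (hr : r ≠ 0) :
    HasDerivAt (fun s => 2 / ((T - s) ^ 2 + r ^ 2))
      (4 * (T - t) / ((T - t) ^ 2 + r ^ 2) ^ 2) t := by
  have h_sub : HasDerivAt (fun s => (T - s) ^ 2 + r ^ 2) (-(2 * (T - t))) t := by
    simpa using (((hasDerivAt_id t).const_sub T).pow 2).add_const (r ^ 2)
  refine ((hasDerivAt_const t 2).fun_div h_sub (by positivity)).congr_deriv ?_
  ring

end Temporal

theorem stmt_16_general (T : ℝ) (u : ℝ → ℝ → ℝ)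
    (hu : ∀ t r : ℝ, u t r = 2 / r * Real.arctan (r / (T - t))) :
    ∀ t r : ℝ, 0 ≤ t → t < T → 0 < r →
      deriv (fun s : ℝ => deriv (fun s' : ℝ => u s' r) s) t
        - deriv (fun ρ : ℝ => deriv (fun ρ' : ℝ => u t ρ') ρ) r
        - 4 / r * deriv (fun ρ : ℝ => u t ρ) r
        + (Real.sin (2 * r * u t r) - 2 * r * u t r) / r ^ 3 = 0 := by
  intro t r _ htT hr
  simp only [hu]
  have ha : T - t ≠ 0 := (sub_pos.mpr htT).ne'
  have h_tt := deriv_deriv_eq_of_hasDerivAt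
    ((eventually_ne_nhds htT.ne).mono fun s hs =>
      hasDerivAt_two_div_mul_arctan_div_sub (sub_ne_zero.mpr hs.symm) hr.ne')
    (hasDerivAt_two_div_sub_sq_add_sq t hr.ne')
  have h_rr := deriv_deriv_eq_of_hasDerivAt
    ((eventually_ne_nhds hr.ne').mono fun ρ hρ => hasDerivAt_two_div_mul_arctan_div ha hρ)
    (hasDerivAt_deriv_two_div_mul_arctan_div ha hr.ne')
  rw [h_tt, h_rr, (hasDerivAt_two_div_mul_arctan_div ha hr.ne').deriv,
    show 2 * r * (2 / r * arctan (r / (T - t))) = 4 * arctan (r / (T - t)) by field_simp; ring,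
    sin_four_mul_arctan]
  field_simp
  ring

/-- The self-similar solution `u(t,r) = (2/r) arctan(r/(T − t))` satisfies
the radial wave maps equation
`∂ₜ²u − ∂ᵣ²u − (4/r)∂ᵣu + (sin(2ru) − 2ru)/r³ = 0` for `0 ≤ t < T`, `r > 0`. -/
theorem stmt_16 (T : ℝ) (hT : 0 < T) (u : ℝ → ℝ → ℝ)
    (hu : ∀ t r : ℝ, u t r = 2 / r * Real.arctan (r / (T - t))) :
    ∀ t r : ℝ, 0 ≤ t → t < T → 0 < r →
      deriv (fun s : ℝ => deriv (fun s' : ℝ => u s' r) s) t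
        - deriv (fun ρ : ℝ => deriv (fun ρ' : ℝ => u t ρ') ρ) r
        - 4 / r * deriv (fun ρ : ℝ => u t ρ) r
        + (Real.sin (2 * r * u t r) - 2 * r * u t r) / r ^ 3 = 0 :=
  stmt_16_general T u hu
end

section
/- Let d ≥ 3 be an integer and T > 0, and define f(t,r) = 2·arctan( r/( sqrt(d − 2)·(T − t) ) ) for 0 ≤ t < T and r > 0. Then f satisfies ∂ₜ²f(t,r) − ∂ᵣ²f(t,r) − ((d − 1)/r)·∂ᵣf(t,r) + ((d − 1)/(2r²))·sin(2f(t,r)) = 0 for all 0 ≤ t < T and r > 0. -/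
/-!
Write `c = √(d - 2)` and `a = c (T - t)`, so that `f = 2 arctan (r / a)`. Every term of the
equation is then an explicit rational function of `r` and `a`; by the double-angle formulas
`sin 2f = 4ar(a² - r²)/(a² + r²)²`. After factoring out `4ar/(a² + r²)²` the four terms
contribute `c²`, `1`, `-(d - 1)(a² + r²)/(2r²)` and `(d - 1)(a² - r²)/(2r²)`, which add up to
`c² + 1 - (d - 1) = 0`.
-/

open Real Filter Topology

lemma sin_two_mul_arctan (x : ℝ) : sin (2 * arctan x) = 2 * x / (1 + x ^ 2) := by
  rw [sin_eq_two_mul_tan_half_div_one_add_tan_half_sq, mul_div_cancel_left₀ _ two_ne_zero,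
    tan_arctan]

lemma cos_two_mul_arctan (x : ℝ) : cos (2 * arctan x) = (1 - x ^ 2) / (1 + x ^ 2) := by
  rw [cos_two_mul, cos_sq_arctan]
  field_simp
  ring

lemma sin_four_mul_arctan_div {a : ℝ} (ha : a ≠ 0) (x : ℝ) :
    sin (2 * (2 * arctan (x / a))) = 4 * a * x * (a ^ 2 - x ^ 2) / (x ^ 2 + a ^ 2) ^ 2 := by
  rw [sin_two_mul, sin_two_mul_arctan, cos_two_mul_arctan]
  field_simp
  ring

lemma hasDerivAt_two_mul_arctan_div {a : ℝ} (ha : a ≠ 0) (x : ℝ) :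
    HasDerivAt (fun x => 2 * arctan (x / a)) (2 * a / (x ^ 2 + a ^ 2)) x := by
  refine (((hasDerivAt_id' x).div_const a).arctan.const_mul 2).congr_deriv ?_
  field_simp
  ring

lemma hasDerivAt_mul_sub (c T s : ℝ) : HasDerivAt (fun s => c * (T - s)) (-c) s := by
  simpa using ((hasDerivAt_id s).const_sub T).const_mul c

lemma hasDerivAt_two_mul_arctan_div_mul_sub {c T r s : ℝ} (h : c * (T - s) ≠ 0) :
    HasDerivAt (fun s => 2 * arctan (r / (c * (T - s))))
      (2 * c * r / ((c * (T - s)) ^ 2 + r ^ 2)) s := by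
  refine ((((hasDerivAt_const s r).div (hasDerivAt_mul_sub c T s) h).arctan).const_mul 2
    ).congr_deriv ?_
  obtain ⟨hc, hTs⟩ := mul_ne_zero_iff.mp h
  simp only [Pi.div_apply]
  field_simp
  ring

lemma hasDerivAt_div_sq_add_sq {k b y : ℝ} (h : y ^ 2 + b ^ 2 ≠ 0) :
    HasDerivAt (fun y => k / (y ^ 2 + b ^ 2)) (-(2 * k * y) / (y ^ 2 + b ^ 2) ^ 2) y := by
  refine ((hasDerivAt_const y k).div (((hasDerivAt_id' y).pow 2).add_const (b ^ 2)) h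
    ).congr_deriv ?_
  simp only [Pi.pow_apply]
  ring

lemma deriv_deriv_two_mul_arctan_div {a : ℝ} (ha : a ≠ 0) (x : ℝ) :
    deriv (fun x => deriv (fun x => 2 * arctan (x / a)) x) x
      = -(4 * a * x) / (x ^ 2 + a ^ 2) ^ 2 := by
  simp only [fun x => (hasDerivAt_two_mul_arctan_div ha x).deriv]
  refine (hasDerivAt_div_sq_add_sq (by positivity)).deriv.trans ?_
  ring

lemma deriv_deriv_two_mul_arctan_div_mul_sub {c T r s : ℝ} (hc : c ≠ 0) (hs : s ≠ T) :
    deriv (fun s => deriv (fun s => 2 * arctan (r / (c * (T - s)))) s) s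
      = 4 * c ^ 2 * r * (c * (T - s)) / ((c * (T - s)) ^ 2 + r ^ 2) ^ 2 := by
  have hev : (fun s => deriv (fun s => 2 * arctan (r / (c * (T - s)))) s)
      =ᶠ[𝓝 s] fun s => 2 * c * r / ((c * (T - s)) ^ 2 + r ^ 2) := by
    filter_upwards [isOpen_ne.mem_nhds hs] with s' hs'
    exact (hasDerivAt_two_mul_arctan_div_mul_sub (mul_ne_zero hc (sub_ne_zero.mpr hs'.symm))).deriv
  have hden : (c * (T - s)) ^ 2 + r ^ 2 ≠ 0 := by
    have : c * (T - s) ≠ 0 := mul_ne_zero hc (sub_ne_zero.mpr hs.symm)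
    positivity
  rw [hev.deriv_eq]
  refine (((hasDerivAt_div_sq_add_sq hden).comp s (hasDerivAt_mul_sub c T s)).deriv).trans ?_
  ring

theorem stmt_17_general (d : ℕ) (hd : 3 ≤ d) (T : ℝ) (f : ℝ → ℝ → ℝ)
    (hf : ∀ t r : ℝ, f t r = 2 * Real.arctan (r / (Real.sqrt ((d : ℝ) - 2) * (T - t)))) :
    ∀ t r : ℝ, 0 ≤ t → t < T → 0 < r →
      deriv (fun s : ℝ => deriv (fun s' : ℝ => f s' r) s) t
        - deriv (fun ρ : ℝ => deriv (fun ρ' : ℝ => f t ρ') ρ) r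
        - ((d : ℝ) - 1) / r * deriv (fun ρ : ℝ => f t ρ) r
        + ((d : ℝ) - 1) / (2 * r ^ 2) * Real.sin (2 * f t r) = 0 := by
  intro t r _ htT hr
  have hd2 : (0 : ℝ) < d - 2 := by
    have : (3 : ℝ) ≤ d := by exact_mod_cast hd
    linarith
  set c := √((d : ℝ) - 2)
  have hc : 0 < c := sqrt_pos.mpr hd2
  have ha : c * (T - t) ≠ 0 := (mul_pos hc (sub_pos.mpr htT)).ne'
  have hft : (fun s => f s r) = fun s => 2 * arctan (r / (c * (T - s))) := funext fun s => hf s r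
  have hfr : (fun ρ => f t ρ) = fun ρ => 2 * arctan (ρ / (c * (T - t))) := funext (hf t)
  rw [hft, hfr, deriv_deriv_two_mul_arctan_div_mul_sub hc.ne' htT.ne,
    deriv_deriv_two_mul_arctan_div ha, (hasDerivAt_two_mul_arctan_div ha r).deriv, hf,
    sin_four_mul_arctan_div ha, sq_sqrt hd2.le]
  field_simp
  ring

/-- For `d ≥ 3` and `T > 0`, the self-similar profile
`f(t,r) = 2 arctan(r/(√(d−2)(T − t)))` satisfies the corotational wave maps equation
`∂ₜ²f − ∂ᵣ²f − ((d−1)/r)∂ᵣf + ((d−1)/(2r²)) sin(2f) = 0` for `0 ≤ t < T`, `r > 0`. -/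
theorem stmt_17 (d : ℕ) (hd : 3 ≤ d) (T : ℝ) (hT : 0 < T) (f : ℝ → ℝ → ℝ)
    (hf : ∀ t r : ℝ, f t r = 2 * Real.arctan (r / (Real.sqrt ((d : ℝ) - 2) * (T - t)))) :
    ∀ t r : ℝ, 0 ≤ t → t < T → 0 < r →
      deriv (fun s : ℝ => deriv (fun s' : ℝ => f s' r) s) t
        - deriv (fun ρ : ℝ => deriv (fun ρ' : ℝ => f t ρ') ρ) r
        - ((d : ℝ) - 1) / r * deriv (fun ρ : ℝ => f t ρ) r
        + ((d : ℝ) - 1) / (2 * r ^ 2) * Real.sin (2 * f t r) = 0 :=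
  stmt_17_general d hd T f hf
end

section
/- Let λ ∈ ℂ. For ρ ∈ (0,1) define w₁(ρ) = (1 − ρ²)^{1/2}·exp( ((1 − λ)/2)·log((1 − ρ)/(1 + ρ)) ) and w₂(ρ) = (1 − ρ²)^{1/2}·exp( ((1 − λ)/2)·log((1 + ρ)/(1 − ρ)) ), where log is the real natural logarithm of the positive real base. Then both w₁ and w₂ satisfy w''(ρ) + ((2λ − λ²)/(1 − ρ²)²)·w(ρ) = 0 for all ρ ∈ (0,1), and their Wronskian satisfies w₁(ρ)·w₂'(ρ) − w₁'(ρ)·w₂(ρ) = 2·(1 − λ) for all ρ ∈ (0,1). -/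
open Set Filter Topology

/-!
On `(-1, 1)` both functions are of the form `(1 - ρ)^a (1 + ρ)^b` with `a + b = 1`
(`a = 1/2 ± (1 - λ)/2`). For such a weight `w'/w = -a/(1 - ρ) + b/(1 + ρ)`, and
`a(a - 1) = b(b - 1) = -ab` collapses `w''/w` to `-ab (1/(1 - ρ) + 1/(1 + ρ))² = -4ab/(1 - ρ²)²`,
with `4ab = 2λ - λ²`. Swapping `a` and `b` gives `w₁ w₂ = 1 - ρ²`, so the Wronskian is
`(1 - ρ²)` times the difference of the logarithmic derivatives, `2(a - b) = 2(1 - λ)`.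
-/

noncomputable def jacobiWeight (a b : ℂ) (x : ℝ) : ℂ :=
  Complex.exp (a * Real.log (1 - x) + b * Real.log (1 + x))

section JacobiWeight

variable {a b : ℂ} {x : ℝ}

lemma one_sub_ofReal_ne_zero (hx : x ∈ Ioo (-1) 1) : (1 - x : ℂ) ≠ 0 := by
  exact_mod_cast (show (1 - x : ℝ) ≠ 0 by linarith [hx.2])

lemma one_add_ofReal_ne_zero (hx : x ∈ Ioo (-1) 1) : (1 + x : ℂ) ≠ 0 := by
  exact_mod_cast (show (1 + x : ℝ) ≠ 0 by linarith [hx.1])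

lemma jacobiWeight_mul (a b c d : ℂ) (x : ℝ) :
    jacobiWeight a b x * jacobiWeight c d x = jacobiWeight (a + c) (b + d) x := by
  simp only [jacobiWeight, ← Complex.exp_add]
  ring_nf

lemma jacobiWeight_one_one (hx : x ∈ Ioo (-1) 1) : jacobiWeight 1 1 x = 1 - (x : ℂ) ^ 2 := by
  have h₀ : 0 < 1 - x := by linarith [hx.2]
  have h₁ : 0 < 1 + x := by linarith [hx.1]
  rw [jacobiWeight, one_mul, one_mul, ← Complex.ofReal_add, ← Complex.ofReal_exp, Real.exp_add,
    Real.exp_log h₀, Real.exp_log h₁]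
  push_cast
  ring

lemma sqrt_mul_exp_log_div_eq_jacobiWeight (μ : ℂ) (hx : x ∈ Ioo (-1) 1) :
    (√(1 - x ^ 2) : ℂ) * Complex.exp (μ * Real.log ((1 - x) / (1 + x))) =
      jacobiWeight (1 / 2 + μ) (1 / 2 - μ) x := by
  have h₀ : 0 < 1 - x := by linarith [hx.2]
  have h₁ : 0 < 1 + x := by linarith [hx.1]
  rw [show 1 - x ^ 2 = (1 - x) * (1 + x) by ring, Real.sqrt_eq_rpow,
    Real.rpow_def_of_pos (mul_pos h₀ h₁), Real.log_mul h₀.ne' h₁.ne', Real.log_div h₀.ne' h₁.ne',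
    Complex.ofReal_exp, ← Complex.exp_add, jacobiWeight]
  push_cast
  ring_nf

lemma sqrt_mul_exp_log_div_eq_jacobiWeight_swap (μ : ℂ) (hx : x ∈ Ioo (-1) 1) :
    (√(1 - x ^ 2) : ℂ) * Complex.exp (μ * Real.log ((1 + x) / (1 - x))) =
      jacobiWeight (1 / 2 - μ) (1 / 2 + μ) x := by
  rw [← inv_div, Real.log_inv, Complex.ofReal_neg, ← neg_mul_comm,
    sqrt_mul_exp_log_div_eq_jacobiWeight _ hx, ← sub_eq_add_neg, sub_neg_eq_add]

lemma hasDerivAt_jacobiWeight (hx : x ∈ Ioo (-1) 1) :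
    HasDerivAt (jacobiWeight a b)
      (jacobiWeight a b x * (-a / (1 - x) + b / (1 + x))) x := by
  have h₀ : (1 - x : ℝ) ≠ 0 := by linarith [hx.2]
  have h₁ : (1 + x : ℝ) ≠ 0 := by linarith [hx.1]
  have hlog₀ := ((Real.hasDerivAt_log h₀).comp x ((hasDerivAt_id x).const_sub 1)).ofReal_comp
  have hlog₁ := ((Real.hasDerivAt_log h₁).comp x ((hasDerivAt_id x).const_add 1)).ofReal_comp
  exact ((hlog₀.const_mul a).add (hlog₁.const_mul b)).cexp.congr_deriv (by
    simp only [jacobiWeight, Pi.add_apply, Function.comp_def]; push_cast; ring)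

lemma hasDerivAt_neg_div_one_sub_add_div_one_add (hx : x ∈ Ioo (-1) 1) :
    HasDerivAt (fun y : ℝ => -a / (1 - y) + b / (1 + y))
      (-a / (1 - x) ^ 2 - b / (1 + x) ^ 2) x := by
  have h₀ := one_sub_ofReal_ne_zero hx
  have h₁ := one_add_ofReal_ne_zero hx
  have hid : HasDerivAt (fun y : ℝ => (y : ℂ)) 1 x := (hasDerivAt_id x).ofReal_comp
  exact (((hasDerivAt_const x (-a)).div (hid.const_sub 1) h₀).add
    ((hasDerivAt_const x b).div (hid.const_add 1) h₁)).congr_deriv (by ring)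

lemma deriv_jacobiWeight_eqOn :
    EqOn (deriv (jacobiWeight a b)) (fun y => jacobiWeight a b y * (-a / (1 - y) + b / (1 + y)))
      (Ioo (-1) 1) :=
  fun _ hy => (hasDerivAt_jacobiWeight hy).deriv

lemma hasDerivAt_deriv_jacobiWeight (hx : x ∈ Ioo (-1) 1) :
    HasDerivAt (deriv (jacobiWeight a b)) (jacobiWeight a b x *
      ((-a / (1 - x) + b / (1 + x)) ^ 2 - a / (1 - x) ^ 2 - b / (1 + x) ^ 2)) x := by
  have h := (hasDerivAt_jacobiWeight (a := a) (b := b) hx).mul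
    (hasDerivAt_neg_div_one_sub_add_div_one_add (a := a) (b := b) hx)
  refine (h.congr_of_eventuallyEq
    (deriv_jacobiWeight_eqOn.eventuallyEq_of_mem (isOpen_Ioo.mem_nhds hx))).congr_deriv ?_
  ring

theorem deriv_deriv_jacobiWeight_add (hab : a + b = 1) (hx : x ∈ Ioo (-1) 1) :
    deriv (deriv (jacobiWeight a b)) x +
      4 * a * b / (1 - (x : ℂ) ^ 2) ^ 2 * jacobiWeight a b x = 0 := by
  obtain rfl : b = 1 - a := by linear_combination hab
  have h₀ := one_sub_ofReal_ne_zero hx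
  have h₁ := one_add_ofReal_ne_zero hx
  rw [(hasDerivAt_deriv_jacobiWeight hx).deriv, show 1 - (x : ℂ) ^ 2 = (1 - x) * (1 + x) by ring]
  field_simp
  ring

theorem jacobiWeight_wronskian (hab : a + b = 1) (hx : x ∈ Ioo (-1) 1) :
    jacobiWeight a b x * deriv (jacobiWeight b a) x -
      deriv (jacobiWeight a b) x * jacobiWeight b a x = 2 * (a - b) := by
  have h₀ := one_sub_ofReal_ne_zero hx
  have h₁ := one_add_ofReal_ne_zero hx
  have hprod : jacobiWeight a b x * jacobiWeight b a x = (1 - x) * (1 + x) := by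
    rw [jacobiWeight_mul, add_comm b, hab, jacobiWeight_one_one hx]
    ring
  rw [deriv_jacobiWeight_eqOn hx, deriv_jacobiWeight_eqOn hx]
  calc _ = jacobiWeight a b x * jacobiWeight b a x *
        ((a - b) * (1 / (1 - x) + 1 / (1 + x))) := by ring
    _ = 2 * (a - b) := by
      rw [hprod]
      field_simp
      ring

end JacobiWeight

/-- For `λ ∈ ℂ`, the functions
`w₁(ρ) = √(1−ρ²) ((1−ρ)/(1+ρ))^{(1−λ)/2}` and `w₂(ρ) = √(1−ρ²) ((1+ρ)/(1−ρ))^{(1−λ)/2}`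
(powers via the real logarithm) solve `w'' + ((2λ − λ²)/(1−ρ²)²)w = 0` on `(0,1)`, with
Wronskian `w₁w₂' − w₁'w₂ = 2(1 − λ)`. -/
theorem stmt_18 (lam : ℂ) (w₁ w₂ : ℝ → ℂ)
    (hw₁ : ∀ ρ : ℝ, w₁ ρ = (Real.sqrt (1 - ρ ^ 2) : ℂ) *
        Complex.exp (((1 - lam) / 2) * (Real.log ((1 - ρ) / (1 + ρ)) : ℂ)))
    (hw₂ : ∀ ρ : ℝ, w₂ ρ = (Real.sqrt (1 - ρ ^ 2) : ℂ) *
        Complex.exp (((1 - lam) / 2) * (Real.log ((1 + ρ) / (1 - ρ)) : ℂ))) :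
    ∀ ρ ∈ Ioo (0:ℝ) 1,
      (deriv (deriv w₁) ρ + ((2 * lam - lam ^ 2) / (1 - (ρ : ℂ) ^ 2) ^ 2) * w₁ ρ = 0) ∧
      (deriv (deriv w₂) ρ + ((2 * lam - lam ^ 2) / (1 - (ρ : ℂ) ^ 2) ^ 2) * w₂ ρ = 0) ∧
      w₁ ρ * deriv w₂ ρ - deriv w₁ ρ * w₂ ρ = 2 * (1 - lam) := by
  intro ρ hρ
  have hρ' : ρ ∈ Ioo (-1 : ℝ) 1 := ⟨by linarith [hρ.1], hρ.2⟩
  have hsum : 1 / 2 + (1 - lam) / 2 + (1 / 2 - (1 - lam) / 2) = 1 := by ring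
  have hsum' : 1 / 2 - (1 - lam) / 2 + (1 / 2 + (1 - lam) / 2) = 1 := by ring
  have hw₁' : w₁ =ᶠ[𝓝 ρ] jacobiWeight (1 / 2 + (1 - lam) / 2) (1 / 2 - (1 - lam) / 2) :=
    Filter.eventually_of_mem (isOpen_Ioo.mem_nhds hρ') fun x hx =>
      (hw₁ x).trans (sqrt_mul_exp_log_div_eq_jacobiWeight _ hx)
  have hw₂' : w₂ =ᶠ[𝓝 ρ] jacobiWeight (1 / 2 - (1 - lam) / 2) (1 / 2 + (1 - lam) / 2) :=
    Filter.eventually_of_mem (isOpen_Ioo.mem_nhds hρ') fun x hx =>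
      (hw₂ x).trans (sqrt_mul_exp_log_div_eq_jacobiWeight_swap _ hx)
  rw [hw₁'.deriv.deriv_eq, hw₂'.deriv.deriv_eq, hw₁'.deriv_eq, hw₂'.deriv_eq, hw₁'.eq_of_nhds,
    hw₂'.eq_of_nhds]
  exact ⟨by linear_combination deriv_deriv_jacobiWeight_add hsum hρ',
    by linear_combination deriv_deriv_jacobiWeight_add hsum' hρ',
    by linear_combination jacobiWeight_wronskian hsum hρ'⟩
end
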